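/- (Wigner transform of a Töplitz quantization is a Gaussian mollification.) Let ħ > 0 and let f ∈ L¹(ℝ⁶) ∩ L^∞(ℝ⁶) be real-valued. Define the kernel K_ħ(x,x′) = (2πħ)^{−3} ∫∫_{ℝ³×ℝ³} f(q′,p′) φ^ħ_{(q′,p′)}(x) · conj( φ^ħ_{(q′,p′)}(x′) ) dq′ dp′ for x, x′ ∈ ℝ³. Then for every (q,p) ∈ ℝ³×ℝ³, ∫_{ℝ³} K_ħ(q + y/2, q − y/2) e^{−i p·y/ħ} dy = (G^6_{ħ/2} * f)(q,p), where G^6_a(z) = (2πa)^{−3} e^{−|z|²/(2a)} is the centered Gaussian density on ℝ⁶ with covariance a·I and * is convolution on ℝ⁶. -/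

import Mathlib

open MeasureTheory Real Filter

noncomputable section

abbrev E3 := EuclideanSpace ℝ (Fin 3)

/-- The coherent state `φ^ħ_{(q,p)}(x) = (πħ)^{-3/4} e^{-|x-q|²/(2ħ)} e^{i p·x/ħ}`. -/
def coherent (hb : ℝ) (q p : E3) (x : E3) : ℂ :=
  (((π * hb) ^ (-(3 : ℝ) / 4) : ℝ) : ℂ) *
    Complex.exp (((-(‖x - q‖ ^ 2) / (2 * hb) : ℝ) : ℂ)) *
    Complex.exp (Complex.I * ((@inner ℝ _ _ p x : ℝ) : ℂ) / (hb : ℂ))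

/-- `L²(ℝ³; ℂ)`. -/
abbrev H2 := Lp ℂ 2 (volume : Measure E3)

/-- `T` is the Töplitz quantization `Op^T_ħ[f]`, characterized weakly by
`⟨ψ₁, T ψ₂⟩ = (2πħ)^{-3} ∫ f(q,p) ⟨ψ₁, φ^ħ_{(q,p)}⟩ ⟨φ^ħ_{(q,p)}, ψ₂⟩ dq dp`. -/
def IsToplitz (hb : ℝ) (f : E3 × E3 → ℝ) (T : H2 →L[ℂ] H2) : Prop :=
  ∀ ψ₁ ψ₂ : H2, (@inner ℂ _ _ ψ₁ (T ψ₂)) =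
    (((2 * π * hb) ^ (3 : ℕ) : ℝ) : ℂ)⁻¹ *
      ∫ z : E3 × E3, (f z : ℂ) *
        ((∫ x : E3, (starRingEnd ℂ) (ψ₁ x) * coherent hb z.1 z.2 x) *
          (∫ x : E3, (starRingEnd ℂ) (coherent hb z.1 z.2 x) * ψ₂ x))

/-- The integral kernel `K_ħ(x,x') = (2πħ)^{-3} ∫∫ f(q',p') φ^ħ_{(q',p')}(x)
conj(φ^ħ_{(q',p')}(x')) dq' dp'` of the Töplitz quantization of `f`. -/
def toplitzKernel (hb : ℝ) (f : E3 × E3 → ℝ) (x x' : E3) : ℂ :=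
  (((2 * π * hb) ^ (3 : ℕ) : ℝ) : ℂ)⁻¹ *
    ∫ z : E3 × E3, (f z : ℂ) * coherent hb z.1 z.2 x *
      (starRingEnd ℂ) (coherent hb z.1 z.2 x')

/-! The Wigner transform is linear in the operator, so by Fubini it suffices to compute it for the
projection onto a single coherent state `φ_z`, `z = (a, b)`. At the symmetric points `q ± y/2` the
product `φ_z(q + y/2) conj φ_z(q - y/2)` is `(πħ)^{-3/2} e^{-|q-a|²/ħ}` times a Gaussian in `y` with
phase `e^{i⟨b, y⟩/ħ}`, so its Fourier transform in `y` is again a Gaussian: the Wigner function of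
`φ_z` is `2³ e^{-(|q-a|² + |p-b|²)/ħ}`. Averaging it against `(2πħ)^{-3} f(z) dz` gives
`G_{ħ/2} * f`. -/

open scoped RealInnerProductSpace ComplexConjugate

section Gaussian

variable {V : Type*} [NormedAddCommGroup V] [InnerProductSpace ℝ V] [FiniteDimensional ℝ V]
  [MeasurableSpace V] [BorelSpace V]

theorem integrable_exp_neg_mul_sq_norm {b : ℝ} (hb : 0 < b) :
    Integrable fun v : V => Real.exp (-b * ‖v‖ ^ 2) := by
  have hb' : 0 < (b : ℂ).re := by simpa
  refine (GaussianFourier.integrable_cexp_neg_mul_sq_norm_add hb' 0 (0 : V)).norm.congr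
    (ae_of_all _ fun v => ?_)
  simp [Complex.norm_exp, ← Complex.ofReal_pow]

theorem integral_cexp_neg_sq_div_add_inner {hb : ℝ} (hhb : 0 < hb) (w : V) :
    ∫ y : V, Complex.exp (-((4 * hb)⁻¹ : ℝ) * ‖y‖ ^ 2 + Complex.I / hb * ⟪w, y⟫) =
      ((4 * π * hb) ^ (Module.finrank ℝ V / 2 : ℝ) * Real.exp (-‖w‖ ^ 2 / hb) : ℝ) := by
  have hre : 0 < (((4 * hb)⁻¹ : ℝ) : ℂ).re := by simp; positivity
  rw [GaussianFourier.integral_cexp_neg_mul_sq_norm_add hre,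
    Complex.ofReal_mul, Complex.ofReal_exp, Complex.ofReal_cpow (by positivity)]
  have hhb' : (hb : ℂ) ≠ 0 := by exact_mod_cast hhb.ne'
  congr 2
  · push_cast; field_simp
  · push_cast; rfl
  · push_cast; field_simp; rw [Complex.I_sq]; ring

end Gaussian

theorem coherent_eq_exp (hb : ℝ) (a b x : E3) :
    coherent hb a b x = (((π * hb) ^ (-(3 : ℝ) / 4) : ℝ) : ℂ) *
      Complex.exp (((-‖x - a‖ ^ 2 / (2 * hb) : ℝ) : ℂ) + Complex.I * ⟪b, x⟫ / hb) := by
  rw [coherent, mul_assoc, ← Complex.exp_add]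

def coherentWignerIntegrand (hb : ℝ) (z : E3 × E3) (q p y : E3) : ℂ :=
  coherent hb z.1 z.2 (q + (1 / 2 : ℝ) • y) * conj (coherent hb z.1 z.2 (q - (1 / 2 : ℝ) • y)) *
    Complex.exp (-Complex.I * ⟪p, y⟫ / hb)

theorem coherentWignerIntegrand_eq {hb : ℝ} (hhb : 0 < hb) (z : E3 × E3) (q p y : E3) :
    coherentWignerIntegrand hb z q p y =
      (((π * hb) ^ (-(3 : ℝ) / 2) * Real.exp (-‖q - z.1‖ ^ 2 / hb) : ℝ) : ℂ) *
        Complex.exp (-((4 * hb)⁻¹ : ℝ) * ‖y‖ ^ 2 + Complex.I / hb * ⟪z.2 - p, y⟫) := by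
  obtain ⟨a, b⟩ := z
  have hnorm : ‖q + (1 / 2 : ℝ) • y - a‖ ^ 2 + ‖q - (1 / 2 : ℝ) • y - a‖ ^ 2 =
      2 * ‖q - a‖ ^ 2 + ‖y‖ ^ 2 / 2 := by
    rw [add_sub_right_comm, sub_right_comm, parallelogram_law_with_norm ℝ, norm_smul]
    norm_num
    ring
  have hinner : ⟪b, q + (1 / 2 : ℝ) • y⟫ - ⟪b, q - (1 / 2 : ℝ) • y⟫ - ⟪p, y⟫ = ⟪b - p, y⟫ := by
    simp only [inner_add_right, inner_sub_right, inner_smul_right, inner_sub_left]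
    ring
  have hconst : (π * hb) ^ (-(3 : ℝ) / 4) * (π * hb) ^ (-(3 : ℝ) / 4) =
      (π * hb) ^ (-(3 : ℝ) / 2) := by
    rw [← Real.rpow_add (by positivity)]; norm_num
  simp only [coherentWignerIntegrand, coherent_eq_exp, map_mul, Complex.conj_ofReal,
    ← Complex.exp_conj, map_add, map_div₀, Complex.conj_I]
  have hnormC := congrArg (fun r : ℝ => (r : ℂ)) hnorm
  have hinnerC := congrArg (fun r : ℝ => (r : ℂ)) hinner
  push_cast at hnormC hinnerC
  have hregroup : ∀ c u v w : ℂ,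
      c * Complex.exp u * (c * Complex.exp v) * Complex.exp w =
        c * c * Complex.exp (u + v + w) := by
    intro c u v w; rw [Complex.exp_add, Complex.exp_add]; ring
  rw [hregroup, ← hconst, Complex.ofReal_mul, Complex.ofReal_mul, Complex.ofReal_exp,
    mul_assoc _ (Complex.exp _), ← Complex.exp_add]
  congr 2
  push_cast
  linear_combination (-1 / (2 * (hb : ℂ))) * hnormC + Complex.I / hb * hinnerC

theorem norm_coherentWignerIntegrand_le {hb : ℝ} (hhb : 0 < hb) (z : E3 × E3) (q p y : E3) :
    ‖coherentWignerIntegrand hb z q p y‖ ≤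
      (π * hb) ^ (-(3 : ℝ) / 2) * Real.exp (-(4 * hb)⁻¹ * ‖y‖ ^ 2) := by
  rw [coherentWignerIntegrand_eq hhb, norm_mul, Complex.norm_real, Complex.norm_exp,
    Real.norm_of_nonneg (by positivity)]
  simp only [Complex.add_re, Complex.neg_re, Complex.mul_re, Complex.ofReal_re, Complex.ofReal_im,
    ← Complex.ofReal_pow, Complex.div_re, Complex.I_re, Complex.I_im, mul_zero, zero_mul,
    zero_div, add_zero, sub_zero]
  have hgauss : Real.exp (-‖q - z.1‖ ^ 2 / hb) ≤ 1 :=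
    Real.exp_le_one_iff.2 (div_nonpos_of_nonpos_of_nonneg (neg_nonpos.2 (sq_nonneg _)) hhb.le)
  calc _ ≤ (π * hb) ^ (-(3 : ℝ) / 2) * 1 * Real.exp (-(4 * hb)⁻¹ * ‖y‖ ^ 2) := by gcongr
    _ = _ := by rw [mul_one]

theorem integral_coherentWignerIntegrand {hb : ℝ} (hhb : 0 < hb) (z : E3 × E3) (q p : E3) :
    ∫ y, coherentWignerIntegrand hb z q p y =
      ((2 ^ 3 * Real.exp (-(‖q - z.1‖ ^ 2 + ‖p - z.2‖ ^ 2) / hb) : ℝ) : ℂ) := by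
  have h8 : (π * hb) ^ (-(3 : ℝ) / 2) * (4 * π * hb) ^ (3 / 2 : ℝ) = 2 ^ 3 := by
    have hx : 0 < π * hb := by positivity
    rw [show 4 * π * hb = 4 * (π * hb) by ring, Real.mul_rpow (by norm_num) hx.le, mul_left_comm,
      ← Real.rpow_add hx, show (4 : ℝ) = 2 ^ (2 : ℝ) by norm_num, ← Real.rpow_mul (by norm_num)]
    norm_num
  simp_rw [coherentWignerIntegrand_eq hhb]
  rw [integral_const_mul, integral_cexp_neg_sq_div_add_inner hhb, finrank_euclideanSpace_fin,
    ← Complex.ofReal_mul]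
  congr 1
  rw [← h8, norm_sub_rev z.2 p, Nat.cast_ofNat, neg_add, add_div, Real.exp_add]
  ring

theorem integrable_uncurry_mul_coherentWignerIntegrand {hb : ℝ} (hhb : 0 < hb)
    {f : E3 × E3 → ℝ} (hf : Integrable f) (q p : E3) :
    Integrable (Function.uncurry fun (y : E3) (z : E3 × E3) =>
      (f z : ℂ) * coherentWignerIntegrand hb z q p y) (volume.prod volume) := by
  have hbound : Integrable (fun w : E3 × (E3 × E3) =>
      Real.exp (-(4 * hb)⁻¹ * ‖w.1‖ ^ 2) * ((π * hb) ^ (-(3 : ℝ) / 2) * |f w.2|))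
      (volume.prod volume) :=
    (integrable_exp_neg_mul_sq_norm (by positivity)).mul_prod (hf.abs.const_mul _)
  have hcont : Continuous fun w : E3 × (E3 × E3) => coherentWignerIntegrand hb w.2 q p w.1 := by
    unfold coherentWignerIntegrand coherent
    fun_prop
  refine hbound.mono' ((Complex.continuous_ofReal.comp_aestronglyMeasurable
    hf.aestronglyMeasurable.comp_snd).mul hcont.aestronglyMeasurable)
    (ae_of_all _ fun ⟨y, z⟩ => ?_)
  rw [Function.uncurry_apply_pair, norm_mul, Complex.norm_real, Real.norm_eq_abs]
  calc |f z| * ‖coherentWignerIntegrand hb z q p y‖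
      ≤ |f z| * ((π * hb) ^ (-(3 : ℝ) / 2) * Real.exp (-(4 * hb)⁻¹ * ‖y‖ ^ 2)) := by
        gcongr; exact norm_coherentWignerIntegrand_le hhb z q p y
    _ = _ := by ring

theorem toplitzKernel_mul_cexp_eq_integral_coherentWignerIntegrand (hb : ℝ) (f : E3 × E3 → ℝ)
    (q p y : E3) :
    toplitzKernel hb f (q + (1 / 2 : ℝ) • y) (q - (1 / 2 : ℝ) • y) *
        Complex.exp (-Complex.I * ⟪p, y⟫ / hb) =
      (((2 * π * hb) ^ 3 : ℝ) : ℂ)⁻¹ * ∫ z, (f z : ℂ) * coherentWignerIntegrand hb z q p y := by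
  rw [toplitzKernel, mul_assoc, ← integral_mul_const]
  congr 1
  refine integral_congr_ae (ae_of_all _ fun z => ?_)
  simp only [coherentWignerIntegrand, mul_assoc]

theorem wigner_of_toplitz_general (hb : ℝ) (hhb : 0 < hb) (f : E3 × E3 → ℝ)
    (hf1 : Integrable f) (q p : E3) :
    (∫ y : E3, toplitzKernel hb f (q + (1 / 2 : ℝ) • y) (q - (1 / 2 : ℝ) • y) *
        Complex.exp (-Complex.I * ((@inner ℝ _ _ p y : ℝ) : ℂ) / (hb : ℂ))) =
      ((∫ w : E3 × E3, (2 * π * (hb / 2)) ^ (-(3 : ℝ)) *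
          Real.exp (-(‖q - w.1‖ ^ 2 + ‖p - w.2‖ ^ 2) / (2 * (hb / 2))) * f w : ℝ) : ℂ) := by
  have hconst : ((2 * π * hb) ^ 3)⁻¹ * 2 ^ 3 = (2 * π * (hb / 2)) ^ (-(3 : ℝ)) := by
    rw [Real.rpow_neg (by positivity), show (3 : ℝ) = (3 : ℕ) by norm_num, Real.rpow_natCast]
    field_simp
  calc _ = (((2 * π * hb) ^ 3 : ℝ) : ℂ)⁻¹ *
        ∫ z, ∫ y, (f z : ℂ) * coherentWignerIntegrand hb z q p y := by
        simp_rw [toplitzKernel_mul_cexp_eq_integral_coherentWignerIntegrand]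
        rw [integral_const_mul,
          integral_integral_swap (integrable_uncurry_mul_coherentWignerIntegrand hhb hf1 q p)]
    _ = (((2 * π * hb) ^ 3 : ℝ) : ℂ)⁻¹ *
        ∫ z, ((f z * (2 ^ 3 * Real.exp (-(‖q - z.1‖ ^ 2 + ‖p - z.2‖ ^ 2) / hb)) : ℝ) : ℂ) := by
        simp_rw [integral_const_mul, integral_coherentWignerIntegrand hhb, Complex.ofReal_mul]
    _ = _ := by
        rw [integral_complex_ofReal, ← Complex.ofReal_inv, ← Complex.ofReal_mul,
          ← integral_const_mul, mul_div_cancel₀ _ two_ne_zero, ← hconst]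
        congr 2 with z
        ring

/-- The Wigner transform of the Töplitz quantization of `f` is the Gaussian mollification
`G^6_{ħ/2} * f`: for all `(q,p)`,
`∫ K_ħ(q + y/2, q - y/2) e^{-i p·y/ħ} dy = (G^6_{ħ/2} * f)(q,p)`, where
`G^6_a(z) = (2πa)^{-3} e^{-|z|²/(2a)}` is the centered Gaussian density on `ℝ⁶` with
covariance `a·I`. -/
theorem wigner_of_toplitz (hb : ℝ) (hhb : 0 < hb) (f : E3 × E3 → ℝ)
    (hfmeas : Measurable f) (hf1 : Integrable f) (hfinf : MemLp f ⊤) (q p : E3) :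
    (∫ y : E3, toplitzKernel hb f (q + (1 / 2 : ℝ) • y) (q - (1 / 2 : ℝ) • y) *
        Complex.exp (-Complex.I * ((@inner ℝ _ _ p y : ℝ) : ℂ) / (hb : ℂ))) =
      ((∫ w : E3 × E3, (2 * π * (hb / 2)) ^ (-(3 : ℝ)) *
          Real.exp (-(‖q - w.1‖ ^ 2 + ‖p - w.2‖ ^ 2) / (2 * (hb / 2))) * f w : ℝ) : ℂ) :=
  wigner_of_toplitz_general hb hhb f hf1 q p

end
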